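/- The elements of M form a basis of M̄: for all ξ, ξ′ ∈ M̄, one has ξ ≥ ξ′ if and only if every finite heap x ∈ M with x ≤ ξ′ satisfies x ≤ ξ. -/

import Mathlib

open MeasureTheory Filter
open scoped ENNReal NNReal

namespace HeapPaper

variable {S : Type}

/-- Commutation pairs of words, generating the trace congruence. -/
def CommRel (I : S → S → Prop) (w₁ w₂ : FreeMonoid S) : Prop :=
  ∃ a b : S, I a b ∧ w₁ = FreeMonoid.of a * FreeMonoid.of b ∧
    w₂ = FreeMonoid.of b * FreeMonoid.of a

/-- The congruence on the free monoid generated by the commutation of independent pieces. -/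
def HeapCon (I : S → S → Prop) : Con (FreeMonoid S) := conGen (CommRel I)

/-- The heap monoid `M(Σ, I)`:  the presented monoid `⟨Σ | ab = ba, (a,b) ∈ I⟩`. -/
def Heap (I : S → S → Prop) := (HeapCon I).Quotient

instance (I : S → S → Prop) : Monoid (Heap I) :=
  inferInstanceAs (Monoid (HeapCon I).Quotient)

/-- The unique additive extension to heaps of a function `φ` defined on pieces. -/
def addExt {A : Type} [AddCommMonoid A] {I : S → S → Prop} (φ : S → A) : Heap I → A :=
  fun x => Multiplicative.toAdd <|
    (Con.lift (HeapCon I) (FreeMonoid.lift fun a => Multiplicative.ofAdd (φ a))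
      (Con.conGen_le.mpr (by
        rintro w₁ w₂ ⟨a, b, hab, rfl, rfl⟩
        exact (Con.ker_rel _).mpr (by simp [map_mul, mul_comm])))) x

/-- The length `|x|` of a heap: the common length of its representative words. -/
def len {I : S → S → Prop} (x : Heap I) : ℕ := addExt (fun _ => 1) x

/-- The number `|x|ₐ` of occurrences of the piece `a` in the heap `x`. -/
def occ {I : S → S → Prop} [DecidableEq S] (a : S) (x : Heap I) : ℕ :=
  addExt (fun b => if b = a then 1 else 0) x

/-- The additive extension `⟨φ, x⟩` of a real-valued cost function. -/
def pairing {I : S → S → Prop} (φ : S → ℝ) (x : Heap I) : ℝ := addExt φ x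

/-- The left-divisibility order on the heap monoid. -/
def hLe {I : S → S → Prop} (x y : Heap I) : Prop := ∃ z : Heap I, y = x * z

/-- Cliques: finite sets of pairwise independent pieces. -/
def Cl (I : S → S → Prop) := {s : Finset S // ∀ a ∈ s, ∀ b ∈ s, a ≠ b → I a b}

/-- The empty clique. -/
def emptyCl (I : S → S → Prop) : Cl I := ⟨∅, by simp⟩

/-- The heap associated with a clique (product of its pieces, in any order). -/
def Cl.heap {I : S → S → Prop} (γ : Cl I) : Heap I :=
  γ.1.noncommProd (fun a => (HeapCon I).mk' (FreeMonoid.of a)) (by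
    intro a ha b hb hab
    have hI : I a b := γ.2 a ha b hb hab
    show (HeapCon I).mk' (FreeMonoid.of a) * (HeapCon I).mk' (FreeMonoid.of b)
        = (HeapCon I).mk' (FreeMonoid.of b) * (HeapCon I).mk' (FreeMonoid.of a)
    rw [← map_mul, ← map_mul]
    exact (Con.eq _).mpr (ConGen.Rel.of _ _ ⟨a, b, hI, rfl, rfl⟩))

/-- The Cartier–Foata move relation `γ → γ'` between cliques. -/
def Move {I : S → S → Prop} (γ γ' : Cl I) : Prop :=
  ∀ b ∈ γ'.1, ∃ a ∈ γ.1, ¬ I a b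

/-- The boundary `∂M`: infinite admissible sequences of nonempty cliques. -/
def Bnd (I : S → S → Prop) :=
  {ξ : ℕ → Cl I // (∀ n, (ξ n).1.Nonempty) ∧ ∀ n, Move (ξ n) (ξ (n + 1))}

/-- `M̄ = M ∪ ∂M`. -/
def MB (I : S → S → Prop) := Heap I ⊕ Bnd I

/-- Partial products of a sequence of cliques. -/
def ppSeq {I : S → S → Prop} (c : ℕ → Cl I) (n : ℕ) : Heap I :=
  ((List.range n).map fun i => (c i).heap).prod

/-- `c` is the Cartier–Foata decomposition of the heap `x`, padded with empty cliques:
`c` is admissible, eventually empty, with partial products eventually equal to `x`. -/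
def CFprop (I : S → S → Prop) (c : ℕ → Cl I) (x : Heap I) : Prop :=
  (∀ n, Move (c n) (c (n + 1))) ∧
    ∃ N, ∀ n, N ≤ n → ppSeq c n = x ∧ c n = emptyCl I

/-- The (padded) Cartier–Foata decomposition of a heap. -/
noncomputable def cf (I : S → S → Prop) (x : Heap I) : ℕ → Cl I :=
  letI := Classical.propDecidable (∃ c, CFprop I c x)
  if h : ∃ c, CFprop I c x then h.choose else fun _ => emptyCl I

/-- The Cartier–Foata sequence of an element of `M̄`. -/
noncomputable def seqOf {I : S → S → Prop} : MB I → ℕ → Cl I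
  | .inl x => cf I x
  | .inr ξ => ξ.1

/-- Partial products of the Cartier–Foata sequence of an element of `M̄`. -/
noncomputable def pp {I : S → S → Prop} (ζ : MB I) (n : ℕ) : Heap I :=
  ppSeq (seqOf ζ) n

/-- The order on `M̄`: `ξ ≤ ξ'` iff `γ₁⋯γₙ ≤ γ'₁⋯γ'ₙ` in `M` for all `n`. -/
noncomputable def mLe {I : S → S → Prop} (ζ ζ' : MB I) : Prop :=
  ∀ n : ℕ, hLe (pp ζ n) (pp ζ' n)

/-- The elementary cylinder `↑x ⊆ ∂M` of base `x ∈ M`. -/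
noncomputable def cyl {I : S → S → Prop} (x : Heap I) : Set (Bnd I) :=
  {ξ : Bnd I | mLe (.inl x) (.inr ξ)}

/-- The σ-algebra `𝔉` on `∂M` generated by the elementary cylinders. -/
noncomputable def Fsa (I : S → S → Prop) : MeasurableSpace (Bnd I) :=
  MeasurableSpace.generateFrom {A : Set (Bnd I) | ∃ x : Heap I, A = cyl x}

noncomputable instance (I : S → S → Prop) : MeasurableSpace (Bnd I) := Fsa I

/-- `ζ` is the least upper bound in `M̄` of the nondecreasing sequence `(x·γ₁⋯γₙ)ₙ`,
where `(γₙ)` is the Cartier–Foata sequence of `ξ`; this characterizes `x·ξ`. -/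
noncomputable def IsConc {I : S → S → Prop} (x : Heap I) (ξ : Bnd I) (ζ : MB I) : Prop :=
  (∀ n : ℕ, mLe (.inl (x * pp (.inr ξ) n)) ζ) ∧
    ∀ η : MB I, (∀ n : ℕ, mLe (.inl (x * pp (.inr ξ) n)) η) → mLe ζ η

/-- The concatenation `x·ξ ∈ ∂M` of a heap `x` and an infinite heap `ξ`. -/
noncomputable def concB {I : S → S → Prop} (x : Heap I) (ξ : Bnd I) : Bnd I :=
  letI := Classical.propDecidable (∃ ζ : Bnd I, IsConc x ξ (.inr ζ))
  if h : ∃ ζ : Bnd I, IsConc x ξ (.inr ζ) then h.choose else ξ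

/-- The difference `ξ − x`: the unique `ζ ∈ ∂M` with `x·ζ = ξ` (junk value if none exists). -/
noncomputable def subB {I : S → S → Prop} (ξ : Bnd I) (x : Heap I) : Bnd I :=
  letI := Classical.propDecidable (∃ ζ : Bnd I, concB x ζ = ξ)
  if h : ∃ ζ : Bnd I, concB x ζ = ξ then h.choose else ξ

/-- Asynchronous stopping time. -/
noncomputable def IsAST {I : S → S → Prop} (V : Bnd I → MB I) : Prop :=
  (∀ ξ : Bnd I, mLe (V ξ) (.inr ξ)) ∧
    ∀ (ξ ξ' : Bnd I) (x : Heap I), V ξ = .inl x → mLe (.inl x) (.inr ξ') → V ξ' = V ξ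

/-- The shift operator `θ_V` associated with an AST `V` (junk: identity outside its domain). -/
noncomputable def shiftV {I : S → S → Prop} (V : Bnd I → MB I) (ξ : Bnd I) : Bnd I :=
  match V ξ with
  | .inl x => subB ξ x
  | .inr _ => ξ

/-- The σ-algebra `𝔉_V` generated by the cylinders of the finite values of `V`. -/
noncomputable def astSA {I : S → S → Prop} (V : Bnd I → MB I) : MeasurableSpace (Bnd I) :=
  MeasurableSpace.generateFrom
    {A : Set (Bnd I) | ∃ x : Heap I, (∃ ξ : Bnd I, V ξ = .inl x) ∧ A = cyl x}

/-- The iterated sequence `(Vₙ)ₙ` of an AST `V`:  `V₀ = 0` and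
`V_{n+1}(ξ) = Vₙ(ξ)·V(ξ − Vₙ(ξ))` if `Vₙ(ξ) ∈ M`, `V_{n+1}(ξ) = ξ` otherwise. -/
noncomputable def iter {I : S → S → Prop} (V : Bnd I → MB I) : ℕ → Bnd I → MB I
  | 0, _ => .inl 1
  | n + 1, ξ =>
    match iter V n ξ with
    | .inl x =>
      match V (subB ξ x) with
      | .inl y => .inl (x * y)
      | .inr ζ => .inr (concB x ζ)
    | .inr _ => .inr ξ

/-- The increment `Δ_{n+1} = V ∘ θ_{Vₙ}` (junk value outside the domain of `θ_{Vₙ}`). -/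
noncomputable def Delta {I : S → S → Prop} (V : Bnd I → MB I) (n : ℕ) (ξ : Bnd I) : MB I :=
  match iter V n ξ with
  | .inl x => V (subB ξ x)
  | .inr _ => .inr ξ

/-- The length of an element of `M̄`, with `|ξ| = ∞` for `ξ ∈ ∂M`. -/
noncomputable def lenE {I : S → S → Prop} : MB I → ℝ≥0∞
  | .inl x => (len x : ℝ≥0∞)
  | .inr _ => ⊤

/-- `E|V| < ∞`. -/
noncomputable def EVfin {I : S → S → Prop} (P : Measure (Bnd I)) (V : Bnd I → MB I) : Prop :=
  ∫⁻ ξ, lenE (V ξ) ∂P < ⊤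

/-- The AST `V` is exhaustive: it is `ℙ`-a.s. finite and `ℙ`-a.s. `ξ = ⋁ₙ Vₙ(ξ)`
(`ξ` is the least upper bound of its iterates). -/
noncomputable def Exhaustive {I : S → S → Prop} (P : Measure (Bnd I)) (V : Bnd I → MB I) : Prop :=
  (∀ᵐ ξ ∂P, ∃ x : Heap I, V ξ = .inl x) ∧
    ∀ᵐ ξ ∂P, (∀ n : ℕ, mLe (iter V n ξ) (.inr ξ)) ∧
      ∀ ζ : MB I, (∀ n : ℕ, mLe (iter V n ξ) ζ) → mLe (.inr ξ) ζ

/-- `ℙ` is a Bernoulli measure: a probability measure on `(∂M, 𝔉)` that is multiplicative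
and positive on elementary cylinders. -/
noncomputable def IsBernoulli {I : S → S → Prop} (P : Measure (Bnd I)) : Prop :=
  IsProbabilityMeasure P ∧
    (∀ x y : Heap I, P (cyl (x * y)) = P (cyl x) * P (cyl y)) ∧
    ∀ x : Heap I, 0 < P (cyl x)

/-- `ζ` is the greatest lower bound, within the complete lattice `L(ξ)`, of the set
`Hₐ(ξ)` of finite subheaps of `ξ` containing an occurrence of `a`:  this characterizes
the first hitting time of `a`. -/
noncomputable def IsHit {I : S → S → Prop} [DecidableEq S] (a : S) (ξ : Bnd I) (ζ : MB I) :
    Prop :=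
  mLe ζ (.inr ξ) ∧
    (∀ x : Heap I, mLe (.inl x) (.inr ξ) → 0 < occ a x → mLe ζ (.inl x)) ∧
    ∀ η : MB I, mLe η (.inr ξ) →
      (∀ x : Heap I, mLe (.inl x) (.inr ξ) → 0 < occ a x → mLe η (.inl x)) → mLe η ζ

/-- The first hitting time of the piece `a`. -/
noncomputable def hit {I : S → S → Prop} [DecidableEq S] (a : S) (ξ : Bnd I) : MB I :=
  letI := Classical.propDecidable (∃ ζ : MB I, IsHit a ξ ζ)
  if h : ∃ ζ : MB I, IsHit a ξ ζ then h.choose else .inr ξ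

/-- A maximal clique: a maximal element of `(𝒞, ≤)`. -/
noncomputable def IsMaxCl {I : S → S → Prop} (γ : Cl I) : Prop :=
  ∀ δ : Cl I, hLe γ.heap δ.heap → δ.heap = γ.heap

/-- The AST cutting an infinite heap at the first occurrence of a maximal clique. -/
noncomputable def Vmax {I : S → S → Prop} (ξ : Bnd I) : MB I :=
  letI := Classical.propDecidable
  if h : ∃ k : ℕ, IsMaxCl (ξ.1 k) then .inl (ppSeq ξ.1 (Nat.find h + 1)) else .inr ξ

/-- The ergodic mean `⟨φ, x⟩ / |x|` (junk value `0` on infinite heaps). -/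
noncomputable def ratioC {I : S → S → Prop} (φ : S → ℝ) : MB I → ℝ
  | .inl x => pairing φ x / (len x : ℝ)
  | .inr _ => 0

/-- The ratio `φ(x)/|x|` for `φ` defined on heaps (junk value `0` on infinite heaps). -/
noncomputable def ratioH {I : S → S → Prop} (φ : Heap I → ℝ) : MB I → ℝ
  | .inl x => φ x / (len x : ℝ)
  | .inr _ => 0

/-- The set `ℭ` of nonempty cliques. -/
def NCl (I : S → S → Prop) := {γ : Cl I // γ.1.Nonempty}

instance [Fintype S] (I : S → S → Prop) : Finite (Cl I) :=
  inferInstanceAs (Finite {s : Finset S // ∀ a ∈ s, ∀ b ∈ s, a ≠ b → I a b})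

instance [Fintype S] (I : S → S → Prop) : Finite (NCl I) :=
  inferInstanceAs (Finite {γ : Cl I // γ.1.Nonempty})

/-- The valuation `f(x) = ℙ(↑x)` associated with `ℙ`. -/
noncomputable def fval {I : S → S → Prop} (P : Measure (Bnd I)) (x : Heap I) : ℝ :=
  (P (cyl x)).toReal

open Classical in
/-- The Möbius transform `h` of the valuation `f` associated with `ℙ`. -/
noncomputable def mobius {I : S → S → Prop} (P : Measure (Bnd I)) (γ : Cl I) : ℝ :=
  ∑ᶠ γ' : Cl I,
    if hLe γ.heap γ'.heap then (-1 : ℝ) ^ (γ'.1.card - γ.1.card) * fval P γ'.heap else 0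

open Classical in
/-- The normalization `g(γ) = Σ_{γ'∈ℭ, γ→γ'} h(γ')`. -/
noncomputable def gnorm {I : S → S → Prop} (P : Measure (Bnd I)) (γ : Cl I) : ℝ :=
  ∑ᶠ γ' : Cl I, if γ'.1.Nonempty ∧ Move γ γ' then mobius P γ' else 0

open Classical in
/-- The transition matrix of the Markov chain of cliques. -/
noncomputable def Pmat {I : S → S → Prop} (P : Measure (Bnd I)) (γ γ' : Cl I) : ℝ :=
  if Move γ γ' then mobius P γ' / gnorm P γ else 0

/-- `π` is a stationary probability distribution, carried by the nonempty cliques, of the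
Markov chain of cliques. -/
noncomputable def IsStationary {I : S → S → Prop} (P : Measure (Bnd I)) (π : Cl I → ℝ) :
    Prop :=
  (∀ γ : Cl I, 0 ≤ π γ) ∧ (π (emptyCl I) = 0) ∧ (∑ᶠ γ : Cl I, π γ = 1) ∧
    ∀ γ' : Cl I, π γ' = ∑ᶠ γ : Cl I, π γ * Pmat P γ γ'

open Classical in
/-- The nonnegative matrix `B` on `ℭ×ℭ`: `B_{γ,γ'} = f(γ')` if `γ → γ'`, else `0`. -/
noncomputable def Bmat {I : S → S → Prop} (P : Measure (Bnd I)) :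
    Matrix (NCl I) (NCl I) ℝ :=
  fun γ γ' => if Move γ.1 γ'.1 then fval P γ'.1.heap else 0

/-- The spectral radius of `B` (as a complex matrix). -/
noncomputable def specRadB [Fintype S] {I : S → S → Prop} (P : Measure (Bnd I)) : ℝ≥0∞ :=
  letI : Fintype (NCl I) := Fintype.ofFinite _
  letI : DecidableEq (NCl I) := Classical.decEq _
  spectralRadius ℂ ((Bmat P).map (algebraMap ℝ ℂ))

/-- The height `τ(x)` of a heap: the number of cliques in its Cartier–Foata decomposition. -/
noncomputable def height {I : S → S → Prop} (x : Heap I) : ℕ :=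
  sInf {N : ℕ | ∀ n, N ≤ n → cf I x n = emptyCl I}

/-- The ratio `|x|/τ(x)` (junk value `0` on infinite heaps). -/
noncomputable def speedRatio {I : S → S → Prop} : MB I → ℝ
  | .inl x => (len x : ℝ) / (height x : ℝ)
  | .inr _ => 0

/-- `ψ ∘ θ_V` extended by `0` outside the domain of `θ_V`. -/
noncomputable def extShift {I : S → S → Prop} (V : Bnd I → MB I) (ψ : Bnd I → ℝ)
    (η : Bnd I) : ℝ :=
  match V η with
  | .inl _ => ψ (shiftV V η)
  | .inr _ => 0

/-! Cutting the Cartier–Foata sequence of `ζ ∈ M̄` after `n` cliques gives, by uniqueness, the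
Cartier–Foata decomposition of the finite heap `x = γ₁⋯γₙ`. Hence `x ≤ ζ`, and `x` agrees with `ζ`
at level `n`; so if every finite lower bound of `ξ'` lies below `ξ`, then `γ'₁⋯γ'ₙ ≤ γ₁⋯γₙ`. -/

section

variable {I : S → S → Prop}

lemma hLe_refl (x : Heap I) : hLe x x := ⟨1, (mul_one x).symm⟩

lemma hLe.trans {x y z : Heap I} (hxy : hLe x y) (hyz : hLe y z) : hLe x z := by
  obtain ⟨a, rfl⟩ := hxy
  obtain ⟨b, rfl⟩ := hyz
  exact ⟨a * b, mul_assoc _ _ _⟩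

lemma mLe.trans {ζ₁ ζ₂ ζ₃ : MB I} (h₁₂ : mLe ζ₁ ζ₂) (h₂₃ : mLe ζ₂ ζ₃) : mLe ζ₁ ζ₃ :=
  fun n => (h₁₂ n).trans (h₂₃ n)

lemma emptyCl_heap : (emptyCl I).heap = 1 :=
  Finset.noncommProd_empty _ _

lemma move_emptyCl (γ : Cl I) : Move γ (emptyCl I) := by
  simp [Move, emptyCl]

lemma ppSeq_succ (c : ℕ → Cl I) (n : ℕ) : ppSeq c (n + 1) = ppSeq c n * (c n).heap := by
  simp [ppSeq, List.range_succ]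

lemma ppSeq_le_ppSeq (c : ℕ → Cl I) {m n : ℕ} (h : m ≤ n) : hLe (ppSeq c m) (ppSeq c n) := by
  induction n, h using Nat.le_induction with
  | base => exact hLe_refl _
  | succ n _ ih => exact ih.trans ⟨(c n).heap, ppSeq_succ c n⟩

lemma ppSeq_congr {c c' : ℕ → Cl I} {n : ℕ} (h : ∀ i < n, c i = c' i) :
    ppSeq c n = ppSeq c' n := by
  unfold ppSeq
  congr 1
  exact List.map_congr_left fun i hi => by rw [h i (List.mem_range.mp hi)]

def truncate (c : ℕ → Cl I) (n : ℕ) : ℕ → Cl I :=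
  fun i => if i < n then c i else emptyCl I

lemma truncate_of_lt (c : ℕ → Cl I) {n i : ℕ} (h : i < n) : truncate c n i = c i :=
  if_pos h

lemma truncate_of_ge (c : ℕ → Cl I) {n i : ℕ} (h : n ≤ i) : truncate c n i = emptyCl I :=
  if_neg (Nat.not_lt.mpr h)

lemma ppSeq_truncate_of_le (c : ℕ → Cl I) {m n : ℕ} (h : m ≤ n) :
    ppSeq (truncate c n) m = ppSeq c m :=
  ppSeq_congr fun _ hi => truncate_of_lt c (hi.trans_le h)

lemma ppSeq_truncate_of_ge (c : ℕ → Cl I) {m n : ℕ} (h : n ≤ m) :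
    ppSeq (truncate c n) m = ppSeq c n := by
  induction m, h using Nat.le_induction with
  | base => exact ppSeq_truncate_of_le c le_rfl
  | succ m hnm ih => rw [ppSeq_succ, truncate_of_ge c hnm, emptyCl_heap, mul_one, ih]

lemma cfProp_truncate {c : ℕ → Cl I} (hc : ∀ m, Move (c m) (c (m + 1))) (n : ℕ) :
    CFprop I (truncate c n) (ppSeq c n) := by
  refine ⟨fun m => ?_, n, fun m hm => ⟨ppSeq_truncate_of_ge c hm, truncate_of_ge c hm⟩⟩
  rcases Nat.lt_or_ge (m + 1) n with hm | hm
  · rw [truncate_of_lt c hm, truncate_of_lt c (Nat.lt_of_succ_lt hm)]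
    exact hc m
  · rw [truncate_of_ge c hm]
    exact move_emptyCl _

variable (hCF : ∀ x : Heap I, ∃! c : ℕ → Cl I, CFprop I c x)
include hCF

lemma cfProp_cf (x : Heap I) : CFprop I (cf I x) x := by
  have h : ∃ c, CFprop I c x := (hCF x).exists
  rw [cf, dif_pos h]
  exact h.choose_spec

lemma cf_eq_of_cfProp {x : Heap I} {c : ℕ → Cl I} (hc : CFprop I c x) : cf I x = c :=
  (hCF x).unique (cfProp_cf hCF x) hc

lemma seqOf_move (ζ : MB I) (m : ℕ) : Move (seqOf ζ m) (seqOf ζ (m + 1)) := by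
  cases ζ with
  | inl x => exact (cfProp_cf hCF x).1 m
  | inr ξ => exact ξ.2.2 m

lemma cf_pp (ζ : MB I) (n : ℕ) : cf I (pp ζ n) = truncate (seqOf ζ) n :=
  cf_eq_of_cfProp hCF (cfProp_truncate (seqOf_move hCF ζ) n)

lemma pp_inl_pp (ζ : MB I) (n : ℕ) : pp (.inl (pp ζ n)) n = pp ζ n := by
  change ppSeq (cf I (pp ζ n)) n = ppSeq (seqOf ζ) n
  rw [cf_pp hCF]
  exact ppSeq_truncate_of_le _ le_rfl

lemma inl_pp_le (ζ : MB I) (n : ℕ) : mLe (.inl (pp ζ n)) ζ := by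
  intro m
  change hLe (ppSeq (cf I (pp ζ n)) m) (ppSeq (seqOf ζ) m)
  rw [cf_pp hCF]
  rcases le_total m n with hm | hm
  · rw [ppSeq_truncate_of_le _ hm]
    exact hLe_refl _
  · rw [ppSeq_truncate_of_ge _ hm]
    exact ppSeq_le_ppSeq _ hm

end

theorem heaps_form_a_basis_general
    {S : Type} (I : S → S → Prop)
    (hCF : ∀ x : Heap I, ∃! c : ℕ → Cl I, CFprop I c x)
 :
    ∀ ξ ξ' : MB I, mLe ξ' ξ ↔ ∀ x : Heap I, mLe (Sum.inl x) ξ' → mLe (Sum.inl x) ξ := by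
  intro ξ ξ'
  refine ⟨fun h x hx => hx.trans h, fun h n => ?_⟩
  have hle := h _ (inl_pp_le hCF ξ' n) n
  rwa [pp_inl_pp hCF] at hle

theorem heaps_form_a_basis
    {S : Type} [Fintype S] [DecidableEq S] (I : S → S → Prop)
    (hsymm : ∀ a b : S, I a b → I b a)
    (hirr : ∀ a : S, ¬ I a a)
    (hconn : ∀ a b : S, Relation.ReflTransGen (fun x y : S => x ≠ y ∧ ¬ I x y) a b)
    (hcard : 1 < Fintype.card S)
    (hCF : ∀ x : Heap I, ∃! c : ℕ → Cl I, CFprop I c x)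
 :
    ∀ ξ ξ' : MB I, mLe ξ' ξ ↔ ∀ x : Heap I, mLe (Sum.inl x) ξ' → mLe (Sum.inl x) ξ :=
  heaps_form_a_basis_general I hCF

end HeapPaper
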